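/- The weighted interval scheduling problem reduces to the token adaptation problem: given any instance of weighted interval scheduling (intervals [sᵢ, dᵢ] with weights uᵢ), there is an instance of the token adaptation problem—with one batch per interval, a single γ value whose processing time equals dᵢ − sᵢ, utility uᵢ, arrival time sᵢ and deadline dᵢ, executed sequentially on one machine—whose optimal utility equals the optimal weight of the interval scheduling instance. -/
import Mathlib


open Finset

/-- Reduction of weighted interval scheduling to token adaptation.
Given intervals `[s i, d i]` with weights `u i`, consider the token-adaptation
instance with one batch per interval, a single `γ` option whose processing time
is `d i − s i`, utility `u i`, arrival time `s i` and deadline `d i`, executed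
sequentially (non-overlapping executions) on one machine with each executed
batch started no earlier than its arrival and finished by its deadline.
The optimal utility of this instance equals the optimal total weight of the
weighted interval scheduling instance. -/
theorem wisp_reduces_to_token_adaptation {n : ℕ}
    (s d u : Fin n → ℝ) (hsd : ∀ i, s i < d i) (hu : ∀ i, 0 ≤ u i) :
    sSup {w : ℝ | ∃ S : Finset (Fin n),
        (∀ i ∈ S, ∀ j ∈ S, i ≠ j → d i ≤ s j ∨ d j ≤ s i) ∧
        w = ∑ i ∈ S, u i} =
    sSup {w : ℝ | ∃ (S : Finset (Fin n)) (t : Fin n → ℝ),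
        (∀ i ∈ S, s i ≤ t i ∧ t i + (d i - s i) ≤ d i) ∧
        (∀ i ∈ S, ∀ j ∈ S, i ≠ j →
          t i + (d i - s i) ≤ t j ∨ t j + (d j - s j) ≤ t i) ∧
        w = ∑ i ∈ S, u i} := by
  congr 1
  ext w
  constructor
  · rintro ⟨S, hdisj, rfl⟩
    refine ⟨S, s, fun i _ => ⟨le_refl _, by linarith⟩, fun i hi j hj hij => ?_, rfl⟩
    rcases hdisj i hi j hj hij with h | h
    · left; linarith
    · right; linarith
  · rintro ⟨S, t, hfeas, hdisj, rfl⟩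
    refine ⟨S, fun i hi j hj hij => ?_, rfl⟩
    have hi' := hfeas i hi
    have hj' := hfeas j hj
    have hti : t i = s i := by linarith [hi'.1, hi'.2]
    have htj : t j = s j := by linarith [hj'.1, hj'.2]
    rcases hdisj i hi j hj hij with h | h
    · left; rw [hti, htj] at h; linarith
    · right; rw [hti, htj] at h; linarith
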